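/- arXiv:1502.03239 — 6 statements merged into one kernel-verified Lean document; each statement's English description precedes it below -/
import Mathlib

section
/- Let H be a complex Hilbert space and let L be a linear subspace of H × H such that Re⟨x', x⟩ ≥ 0 for every pair (x, x') ∈ L. Then the set C(L) = {(x + x', x − x') : (x, x') ∈ L} is the graph of a linear contraction defined on a linear subspace of H; that is, if (u, v₁) ∈ C(L) and (u, v₂) ∈ C(L) then v₁ = v₂, and ‖v‖ ≤ ‖u‖ for every (u, v) ∈ C(L). Conversely, if D is a linear subspace of H and T : D → H is a linear map with ‖Th‖ ≤ ‖h‖ for all h ∈ D, then the subspace {((I+T)h, (I−T)h) : h ∈ D} of H × H satisfies Re⟨x', x⟩ ≥ 0 for all its elements (x, x'). -/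
open scoped InnerProductSpace

lemma contraction_aux {H : Type*} [NormedAddCommGroup H] [InnerProductSpace ℂ H]
    (x x' : H) (h : 0 ≤ (⟪x', x⟫_ℂ).re) : ‖x - x'‖ ≤ ‖x + x'‖ := by
  have h1 : ‖x - x'‖ ^ 2 = ‖x‖ ^ 2 - 2 * (⟪x, x'⟫_ℂ).re + ‖x'‖ ^ 2 := by
    simpa using norm_sub_sq (𝕜 := ℂ) x x'
  have h2 : ‖x + x'‖ ^ 2 = ‖x‖ ^ 2 + 2 * (⟪x, x'⟫_ℂ).re + ‖x'‖ ^ 2 := by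
    simpa using norm_add_sq (𝕜 := ℂ) x x'
  have hre : (⟪x, x'⟫_ℂ).re = (⟪x', x⟫_ℂ).re := by
    simpa using inner_re_symm (𝕜 := ℂ) x x'
  nlinarith [norm_nonneg (x - x'), norm_nonneg (x + x')]

/-- The Cayley transform `C(L) = {(x + x', x − x') : (x, x') ∈ L}` of an accretive linear
relation `L` in a complex Hilbert space `H` is the graph of a contraction defined on a
subspace of `H`; conversely, the inverse transform of (the graph of) a contraction defined
on a subspace is an accretive relation. -/
theorem stmt_0 {H : Type*} [NormedAddCommGroup H] [InnerProductSpace ℂ H] :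
    (∀ L : Submodule ℂ (H × H),
      (∀ p ∈ L, 0 ≤ (⟪p.2, p.1⟫_ℂ).re) →
      (∀ u v₁ v₂ : H,
          (u, v₁) ∈ {q : H × H | ∃ p ∈ L, q = (p.1 + p.2, p.1 - p.2)} →
          (u, v₂) ∈ {q : H × H | ∃ p ∈ L, q = (p.1 + p.2, p.1 - p.2)} → v₁ = v₂) ∧
      (∀ u v : H, (u, v) ∈ {q : H × H | ∃ p ∈ L, q = (p.1 + p.2, p.1 - p.2)} →
          ‖v‖ ≤ ‖u‖)) ∧
    (∀ (D : Submodule ℂ H) (T : D →ₗ[ℂ] H), (∀ h : D, ‖T h‖ ≤ ‖h‖) →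
      ∀ x x' : H, (x, x') ∈ {q : H × H | ∃ h : D, q = ((h : H) + T h, (h : H) - T h)} →
        0 ≤ (⟪x', x⟫_ℂ).re) := by
  constructor
  · intro L hL
    have hcontr : ∀ u v : H,
        (u, v) ∈ {q : H × H | ∃ p ∈ L, q = (p.1 + p.2, p.1 - p.2)} → ‖v‖ ≤ ‖u‖ := by
      rintro u v ⟨p, hp, heq⟩
      have h1 : u = p.1 + p.2 := congrArg Prod.fst heq
      have h2 : v = p.1 - p.2 := congrArg Prod.snd heq
      rw [h1, h2]
      exact contraction_aux p.1 p.2 (hL p hp)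
    refine ⟨?_, hcontr⟩
    rintro u v₁ v₂ ⟨p, hp, heqp⟩ ⟨q, hq, heqq⟩
    have hd : (0, v₁ - v₂) ∈ {q : H × H | ∃ p ∈ L, q = (p.1 + p.2, p.1 - p.2)} := by
      refine ⟨p - q, L.sub_mem hp hq, ?_⟩
      have hp1 : u = p.1 + p.2 := congrArg Prod.fst heqp
      have hp2 : v₁ = p.1 - p.2 := congrArg Prod.snd heqp
      have hq1 : u = q.1 + q.2 := congrArg Prod.fst heqq
      have hq2 : v₂ = q.1 - q.2 := congrArg Prod.snd heqq
      have : p.1 + p.2 = q.1 + q.2 := hp1 ▸ hq1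
      have hfst : p.1 - q.1 + (p.2 - q.2) = 0 := by
        rw [sub_add_sub_comm, sub_eq_zero]; exact this
      refine Prod.ext ?_ ?_ <;> simp only [Prod.fst_sub, Prod.snd_sub]
      · exact hfst.symm
      · rw [hp2, hq2]; abel
    have := hcontr 0 (v₁ - v₂) hd
    simp only [norm_zero] at this
    exact sub_eq_zero.mp (norm_le_zero_iff.mp this)
  · rintro D T hT x x' ⟨h, heq⟩
    have h1 : x = (h : H) + T h := congrArg Prod.fst heq
    have h2 : x' = (h : H) - T h := congrArg Prod.snd heq
    have key : (⟪x', x⟫_ℂ).re = ‖(h : H)‖ ^ 2 - ‖T h‖ ^ 2 := by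
      rw [h1, h2]
      simp only [inner_sub_left, inner_add_right, Complex.add_re, Complex.sub_re]
      have e1 : (⟪(h : H), (h : H)⟫_ℂ).re = ‖(h : H)‖ ^ 2 := inner_self_eq_norm_sq (𝕜 := ℂ) _
      have e2 : (⟪T h, T h⟫_ℂ).re = ‖T h‖ ^ 2 := inner_self_eq_norm_sq (𝕜 := ℂ) _
      have e3 : (⟪(h : H), T h⟫_ℂ).re = (⟪T h, (h : H)⟫_ℂ).re := by
        simpa using inner_re_symm (𝕜 := ℂ) (h : H) (T h)
      linarith
    rw [key]
    have := hT h
    have hn : ‖T h‖ ≤ ‖(h : H)‖ := this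
    nlinarith [norm_nonneg (T h)]
end

section
/- Let H be a complex Hilbert space, A a bounded linear operator on H, and α ∈ (0, π/2). Then the two operator-norm conditions ‖(sin α)·A + i(cos α)·I‖ ≤ 1 and ‖(sin α)·A − i(cos α)·I‖ ≤ 1 both hold if and only if for every f ∈ H one has 2·|Im⟨Af, f⟩| ≤ (tan α)·(‖f‖² − ‖Af‖²). -/
open scoped InnerProductSpace

/-- For a bounded operator `A` on a complex Hilbert space and `α ∈ (0, π/2)`, the two norm
conditions `‖(sin α)·A ± i(cos α)·I‖ ≤ 1` hold simultaneously if and only if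
`2·|Im⟪Af, f⟫| ≤ (tan α)·(‖f‖² − ‖Af‖²)` for every `f`. -/
theorem stmt_1 {H : Type*} [NormedAddCommGroup H] [InnerProductSpace ℂ H] [CompleteSpace H]
    (A : H →L[ℂ] H) (α : ℝ) (hα : α ∈ Set.Ioo 0 (Real.pi / 2)) :
    (‖(Real.sin α : ℂ) • A + (Complex.I * (Real.cos α : ℂ)) • (1 : H →L[ℂ] H)‖ ≤ 1 ∧
      ‖(Real.sin α : ℂ) • A - (Complex.I * (Real.cos α : ℂ)) • (1 : H →L[ℂ] H)‖ ≤ 1) ↔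
    ∀ f : H, 2 * |(⟪A f, f⟫_ℂ).im| ≤ Real.tan α * (‖f‖ ^ 2 - ‖A f‖ ^ 2) := by
  obtain ⟨hα0, hα1⟩ := hα
  have hpi := Real.pi_pos
  have hs : 0 < Real.sin α := Real.sin_pos_of_pos_of_lt_pi hα0 (by linarith)
  have hc : 0 < Real.cos α := Real.cos_pos_of_mem_Ioo ⟨by linarith, hα1⟩
  set s := Real.sin α with hsdef
  set c := Real.cos α with hcdef
  have hsc : s ^ 2 + c ^ 2 = 1 := Real.sin_sq_add_cos_sq α
  have htan : Real.tan α = s / c := Real.tan_eq_sin_div_cos α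
  have keyadd : ∀ f : H, ‖((s:ℂ) • A + (Complex.I * c) • (1 : H →L[ℂ] H)) f‖ ^ 2 =
      s^2 * ‖A f‖^2 + c^2 * ‖f‖^2 - 2*s*c*(⟪A f, f⟫_ℂ).im := by
    intro f
    have h1 : ((s:ℂ) • A + (Complex.I * c) • (1 : H →L[ℂ] H)) f
        = (s:ℂ) • A f + (Complex.I * c) • f := by simp
    rw [h1, @norm_add_sq ℂ, inner_smul_left, inner_smul_right]
    simp [norm_smul, Complex.mul_re, Complex.norm_def, Complex.normSq, Complex.conj_ofReal,
      abs_of_pos hs, abs_of_pos hc]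
    ring
  have keysub : ∀ f : H, ‖((s:ℂ) • A - (Complex.I * c) • (1 : H →L[ℂ] H)) f‖ ^ 2 =
      s^2 * ‖A f‖^2 + c^2 * ‖f‖^2 + 2*s*c*(⟪A f, f⟫_ℂ).im := by
    intro f
    have h1 : ((s:ℂ) • A - (Complex.I * c) • (1 : H →L[ℂ] H)) f
        = (s:ℂ) • A f - (Complex.I * c) • f := by simp
    rw [h1, @norm_sub_sq ℂ, inner_smul_left, inner_smul_right]
    simp [norm_smul, Complex.mul_re, Complex.norm_def, Complex.normSq, Complex.conj_ofReal,
      abs_of_pos hs, abs_of_pos hc]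
    ring
  rw [htan]
  constructor
  · rintro ⟨hA, hB⟩ f
    have eA : ‖((s:ℂ) • A + (Complex.I * c) • (1 : H →L[ℂ] H)) f‖ ≤ ‖f‖ := by
      calc _ ≤ ‖(s:ℂ) • A + (Complex.I * c) • (1 : H →L[ℂ] H)‖ * ‖f‖ :=
          ContinuousLinearMap.le_opNorm _ f
        _ ≤ 1 * ‖f‖ := by gcongr
        _ = ‖f‖ := one_mul _
    have eB : ‖((s:ℂ) • A - (Complex.I * c) • (1 : H →L[ℂ] H)) f‖ ≤ ‖f‖ := by
      calc _ ≤ ‖(s:ℂ) • A - (Complex.I * c) • (1 : H →L[ℂ] H)‖ * ‖f‖ :=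
          ContinuousLinearMap.le_opNorm _ f
        _ ≤ 1 * ‖f‖ := by gcongr
        _ = ‖f‖ := one_mul _
    have qA := pow_le_pow_left₀ (norm_nonneg _) eA 2
    have qB := pow_le_pow_left₀ (norm_nonneg _) eB 2
    rw [keyadd f] at qA
    rw [keysub f] at qB
    rw [div_mul_eq_mul_div, le_div_iff₀ hc]
    rcases abs_cases (⟪A f, f⟫_ℂ).im with ⟨he, _⟩ | ⟨he, _⟩ <;> rw [he] <;> nlinarith
  · intro h
    have main : ∀ f : H, (‖((s:ℂ) • A + (Complex.I * c) • (1 : H →L[ℂ] H)) f‖ ≤ 1 * ‖f‖ ∧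
        ‖((s:ℂ) • A - (Complex.I * c) • (1 : H →L[ℂ] H)) f‖ ≤ 1 * ‖f‖) := by
      intro f
      have hf := h f
      rw [div_mul_eq_mul_div, le_div_iff₀ hc] at hf
      have h1 : |(⟪A f, f⟫_ℂ).im| ≥ (⟪A f, f⟫_ℂ).im := le_abs_self _
      have h2 : |(⟪A f, f⟫_ℂ).im| ≥ -(⟪A f, f⟫_ℂ).im := neg_le_abs _
      constructor <;>
      · rw [one_mul, ← Real.sqrt_sq (norm_nonneg f), ← Real.sqrt_sq (norm_nonneg _)]
        apply Real.sqrt_le_sqrt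
        have hfs := mul_le_mul_of_nonneg_left hf hs.le
        first
          | rw [keyadd f]; nlinarith [mul_pos hs hc, mul_nonneg (mul_pos hs hc).le (abs_nonneg (⟪A f, f⟫_ℂ).im)]
          | rw [keysub f]; nlinarith [mul_pos hs hc, mul_nonneg (mul_pos hs hc).le (abs_nonneg (⟪A f, f⟫_ℂ).im)]
    exact ⟨ContinuousLinearMap.opNorm_le_bound _ zero_le_one fun f => (main f).1,
      ContinuousLinearMap.opNorm_le_bound _ zero_le_one fun f => (main f).2⟩
end

section
/- Let H₁ and H₂ be complex Hilbert spaces and T : H₁ → H₂ a linear contraction (‖T‖ ≤ 1). With D_T = (I − T*T)^{1/2} and D_{T*} = (I − TT*)^{1/2}, the following three sets coincide: (range of T) ∩ (range of D_{T*}) = range of (T ∘ D_T) = range of (D_{T*} ∘ T). -/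
/-!
Approximating `√` uniformly by polynomials on the spectra shows that `T D_T = D_{T*} T`, and,
applied to `T*`, that `T* D_{T*} = D_T T*`. If `y = T x = D_{T*} z`, then
`D_T (D_T x + T* z) = (x - T* T x) + T* D_{T*} z = x`, so `y = T D_T (D_T x + T* z)`.
-/

open ContinuousLinearMap Polynomial

section

variable {E F : Type*} [NormedAddCommGroup E] [NormedSpace ℂ E] [NormedAddCommGroup F]
  [NormedSpace ℂ F]

theorem ContinuousLinearMap.comp_aeval_eq_aeval_comp (T : E →L[ℂ] F) {a : E →L[ℂ] E}
    {b : F →L[ℂ] F} (h : T ∘L a = b ∘L T) (p : ℝ[X]) :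
    T ∘L aeval a p = aeval b p ∘L T := by
  induction p using Polynomial.induction_on with
  | C r => ext x; simp [Algebra.algebraMap_eq_smul_one]
  | add p q hp hq => rw [map_add, map_add, comp_add, add_comp, hp, hq]
  | monomial n r ih =>
    rw [pow_succ, ← mul_assoc, map_mul (aeval a), map_mul (aeval b), aeval_X, aeval_X, mul_def,
      mul_def, ← comp_assoc, ih, comp_assoc, h, comp_assoc]

end

section

variable {E F : Type*} [NormedAddCommGroup E] [InnerProductSpace ℂ E] [CompleteSpace E]
  [NormedAddCommGroup F] [InnerProductSpace ℂ F] [CompleteSpace F]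

theorem norm_cfc_sub_aeval_le {c : E →L[ℂ] E} (hc : IsSelfAdjoint c) {f : ℝ → ℝ}
    (hf : Continuous f) {p : ℝ[X]} {s : Set ℝ} (hs : spectrum ℝ c ⊆ s) {ε : ℝ} (hε : 0 ≤ ε)
    (hp : ∀ x ∈ s, |p.eval x - f x| ≤ ε) :
    ‖cfc f c - aeval c p‖ ≤ ε := by
  rw [← cfc_polynomial p c, ← cfc_sub ..]
  refine norm_cfc_le hε fun x hx => ?_
  rw [Real.norm_eq_abs, abs_sub_comm]
  exact hp x (hs hx)

theorem ContinuousLinearMap.comp_cfc_eq_cfc_comp (T : E →L[ℂ] F) {a : E →L[ℂ] E}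
    {b : F →L[ℂ] F} (ha : IsSelfAdjoint a) (hb : IsSelfAdjoint b) (h : T ∘L a = b ∘L T)
    {f : ℝ → ℝ} (hf : Continuous f) :
    T ∘L cfc f a = cfc f b ∘L T := by
  obtain ⟨R, hR⟩ := (((spectrum.isCompact (𝕜 := ℝ) a).union
    (spectrum.isCompact (𝕜 := ℝ) b)).isBounded.subset_closedBall 0)
  rw [Real.closedBall_eq_Icc, Set.union_subset_iff] at hR
  refine sub_eq_zero.mp <| norm_le_zero_iff.mp <| le_of_forall_pos_le_add fun ε hε => ?_
  set δ := ε / (2 * ‖T‖ + 1)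
  have hδ : 0 < δ := by positivity
  obtain ⟨p, hp⟩ := exists_polynomial_near_of_continuousOn _ _ f hf.continuousOn δ hδ
  have hpa := norm_cfc_sub_aeval_le ha hf hR.1 hδ.le fun x hx => (hp x hx).le
  have hpb := norm_cfc_sub_aeval_le hb hf hR.2 hδ.le fun x hx => (hp x hx).le
  calc ‖T ∘L cfc f a - cfc f b ∘L T‖
      = ‖T ∘L (cfc f a - aeval a p) - (cfc f b - aeval b p) ∘L T‖ := by
        rw [comp_sub, sub_comp, T.comp_aeval_eq_aeval_comp h]; abel_nf
    _ ≤ ‖T‖ * ‖cfc f a - aeval a p‖ + ‖cfc f b - aeval b p‖ * ‖T‖ :=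
        (norm_sub_le _ _).trans (add_le_add (opNorm_comp_le _ _) (opNorm_comp_le _ _))
    _ ≤ ‖T‖ * δ + δ * ‖T‖ := by gcongr
    _ ≤ (2 * ‖T‖ + 1) * δ := by linarith
    _ = 0 + ε := by rw [zero_add]; exact mul_div_cancel₀ ε (by positivity)

theorem ContinuousLinearMap.comp_sqrt_eq_sqrt_comp (T : E →L[ℂ] F) {a : E →L[ℂ] E}
    {b : F →L[ℂ] F} (ha : 0 ≤ a) (hb : 0 ≤ b) (h : T ∘L a = b ∘L T) :
    T ∘L CFC.sqrt a = CFC.sqrt b ∘L T := by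
  rw [CFC.sqrt_eq_real_sqrt a, CFC.sqrt_eq_real_sqrt b, cfcₙ_eq_cfc, cfcₙ_eq_cfc]
  exact T.comp_cfc_eq_cfc_comp (.of_nonneg ha) (.of_nonneg hb) h Real.continuous_sqrt

theorem ContinuousLinearMap.one_sub_adjoint_comp_self_nonneg {T : E →L[ℂ] F} (hT : ‖T‖ ≤ 1) :
    0 ≤ 1 - adjoint T ∘L T := by
  have h0 : 0 ≤ adjoint T ∘L T := (nonneg_iff_isPositive _).mpr T.isPositive_adjoint_comp_self
  refine sub_nonneg.mpr <| (CStarAlgebra.norm_le_one_iff_of_nonneg _ h0).mp ?_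
  rw [norm_adjoint_comp_self]
  exact mul_le_one₀ hT (norm_nonneg T) hT

theorem ContinuousLinearMap.comp_sqrt_one_sub_adjoint_comp_self {T : E →L[ℂ] F} (hT : ‖T‖ ≤ 1) :
    T ∘L CFC.sqrt (1 - adjoint T ∘L T) = CFC.sqrt (1 - T ∘L adjoint T) ∘L T := by
  have hT' : ‖adjoint T‖ ≤ 1 := (adjoint.norm_map T).trans_le hT
  refine T.comp_sqrt_eq_sqrt_comp (one_sub_adjoint_comp_self_nonneg hT) ?_ ?_
  · simpa using one_sub_adjoint_comp_self_nonneg hT'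
  · ext x; simp

theorem ContinuousLinearMap.range_inter_range_sqrt_subset {T : E →L[ℂ] F} (hT : ‖T‖ ≤ 1) :
    Set.range T ∩ Set.range ⇑(CFC.sqrt (1 - T ∘L adjoint T)) ⊆
      Set.range ⇑(T ∘L CFC.sqrt (1 - adjoint T ∘L T)) := by
  rintro _ ⟨⟨x, rfl⟩, z, hz⟩
  set D := CFC.sqrt (1 - adjoint T ∘L T)
  have hDD : D (D x) = x - adjoint T (T x) := by
    simpa using congr($(CFC.sqrt_mul_sqrt_self _ (one_sub_adjoint_comp_self_nonneg hT)) x)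
  have hDT : D (adjoint T z) = adjoint T (CFC.sqrt (1 - T ∘L adjoint T) z) := by
    simpa using
      congr($(comp_sqrt_one_sub_adjoint_comp_self ((adjoint.norm_map T).trans_le hT)) z).symm
  refine ⟨D x + adjoint T z, ?_⟩
  rw [comp_apply, map_add, hDD, hDT, hz, sub_add_cancel]

end

/-- For a contraction `T : H₁ → H₂` with defect operators `D_T = (I − T*T)^{1/2}` and
`D_{T*} = (I − TT*)^{1/2}`, one has
`ran T ∩ ran D_{T*} = ran (T D_T) = ran (D_{T*} T)`. -/
theorem stmt_2 {H₁ H₂ : Type*} [NormedAddCommGroup H₁] [InnerProductSpace ℂ H₁]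
    [CompleteSpace H₁] [NormedAddCommGroup H₂] [InnerProductSpace ℂ H₂] [CompleteSpace H₂]
    (T : H₁ →L[ℂ] H₂) (hT : ‖T‖ ≤ 1) :
    Set.range ⇑T ∩ Set.range ⇑(CFC.sqrt (1 - T ∘L adjoint T)) =
        Set.range ⇑(T ∘L CFC.sqrt (1 - adjoint T ∘L T)) ∧
      Set.range ⇑(T ∘L CFC.sqrt (1 - adjoint T ∘L T)) =
        Set.range ⇑(CFC.sqrt (1 - T ∘L adjoint T) ∘L T) := by
  have hcomm := comp_sqrt_one_sub_adjoint_comp_self hT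
  refine ⟨(range_inter_range_sqrt_subset hT).antisymm ?_, by rw [hcomm]⟩
  rintro _ ⟨x, rfl⟩
  exact ⟨⟨_, rfl⟩, T x, congr($hcomm x).symm⟩
end

section
/- Let H be a complex Hilbert space, let B̂₀ and B̂₁ be selfadjoint contractions on H with B̂₀ ≤ B̂₁ (Loewner order), and let N be a closed subspace of H containing the range of B̂₁ − B̂₀. For ξ ∈ ℂ \ [−1, 1] define the bounded operators on N: Q̂₀(ξ) = P_N [ (B̂₁ − B̂₀)^{1/2} (B̂₀ − ξI)^{-1} (B̂₁ − B̂₀)^{1/2} + I ]↾N and Q̂₁(ξ) = P_N [ (B̂₁ − B̂₀)^{1/2} (B̂₁ − ξI)^{-1} (B̂₁ − B̂₀)^{1/2} − I ]↾N. Then Q̂₀(ξ) Q̂₁(ξ) = Q̂₁(ξ) Q̂₀(ξ) = −I_N for every ξ ∈ ℂ \ [−1, 1]. -/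
/-!
With `R = (B̂₁ − B̂₀)^{1/2}` and `Aᵢ = B̂ᵢ − ξ`, so that `R² = A₁ − A₀`, the
resolvent identity `A₀⁻¹ (A₁ − A₀) A₁⁻¹ = A₀⁻¹ − A₁⁻¹` gives
`(R A₀⁻¹ R + 1)(R A₁⁻¹ R − 1) = −1` on all of `H`, and likewise in the other order.
Both factors map `N` into itself because `ran R ⊆ N`, so the identities survive
compression to `N`.
-/

namespace Ring

variable {A : Type*} [Ring A] {a b r : A}

theorem mul_inverse_mul_add_one_mul_mul_inverse_mul_sub_one (hab : IsUnit a ↔ IsUnit b)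
    (hr : r * r = b - a) :
    (r * (a⁻¹ʳ * r) + 1) * (r * (b⁻¹ʳ * r) - 1) = -1 := by
  calc (r * (a⁻¹ʳ * r) + 1) * (r * (b⁻¹ʳ * r) - 1)
      = r * (a⁻¹ʳ * (r * r) * b⁻¹ʳ - (a⁻¹ʳ - b⁻¹ʳ)) * r - 1 := by noncomm_ring
    _ = -1 := by rw [hr, inverse_sub_inverse hab, sub_self, mul_zero, zero_mul, zero_sub]

theorem mul_inverse_mul_sub_one_mul_mul_inverse_mul_add_one (hab : IsUnit a ↔ IsUnit b)
    (hr : r * r = b - a) :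
    (r * (b⁻¹ʳ * r) - 1) * (r * (a⁻¹ʳ * r) + 1) = -1 := by
  calc (r * (b⁻¹ʳ * r) - 1) * (r * (a⁻¹ʳ * r) + 1)
      = r * (b⁻¹ʳ * (r * r) * a⁻¹ʳ + (b⁻¹ʳ - a⁻¹ʳ)) * r - 1 := by noncomm_ring
    _ = -1 := by
      rw [hr, inverse_sub_inverse hab.symm, ← neg_sub a b, mul_neg, neg_mul, neg_add_cancel,
        mul_zero, zero_mul, zero_sub]

end Ring

theorem IsSelfAdjoint.isUnit_sub_smul_one {A : Type*} [CStarAlgebra A] {a : A}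
    (ha : IsSelfAdjoint a) (ha1 : ‖a‖ ≤ 1) {ξ : ℂ}
    (hξ : ¬(ξ.im = 0 ∧ -1 ≤ ξ.re ∧ ξ.re ≤ 1)) :
    IsUnit (a - ξ • 1) := by
  nontriviality A
  have hξa : ξ ∉ spectrum ℂ a := fun hmem ↦ by
    have him : ξ.im = 0 := by simpa using congrArg Complex.im (ha.mem_spectrum_eq_re hmem)
    have hre : |ξ.re| ≤ 1 :=
      (Complex.abs_re_le_norm ξ).trans ((spectrum.norm_le_norm_of_mem hmem).trans ha1)
    exact hξ ⟨him, abs_le.mp hre⟩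
  simpa [Algebra.algebraMap_eq_smul_one] using (spectrum.notMem_iff.mp hξa).neg

section InnerProductSpace

variable {𝕜 E : Type*} [RCLike 𝕜] [NormedAddCommGroup E] [InnerProductSpace 𝕜 E]

/-- `Nᗮ ⊆ ker (T * T) = ker T`, hence `ran T ⊆ (ker T)ᗮ ⊆ N`. -/
theorem IsSelfAdjoint.apply_mem_of_mul_self_apply_mem [CompleteSpace E] {T : E →L[𝕜] E}
    (hT : IsSelfAdjoint T) {N : Submodule 𝕜 E} [N.HasOrthogonalProjection]
    (h : ∀ x, (T * T) x ∈ N) (x : E) : T x ∈ N := by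
  have hker : ∀ y ∈ Nᗮ, T y = 0 := fun y hy ↦ by
    have : inner 𝕜 (T y) (T y) = 0 := by
      rw [← hT.adjoint_eq, ContinuousLinearMap.adjoint_inner_left, hT.adjoint_eq]
      exact (Submodule.mem_orthogonal' N y).mp hy _ (h y)
    exact inner_self_eq_zero.mp this
  rw [← N.orthogonal_orthogonal]
  refine (Submodule.mem_orthogonal _ _).mpr fun y hy ↦ ?_
  rw [← ContinuousLinearMap.adjoint_inner_left, hT.adjoint_eq, hker y hy, inner_zero_left]

namespace Submodule

variable (N : Submodule 𝕜 E) [N.HasOrthogonalProjection]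

noncomputable def compression (T : E →L[𝕜] E) : N →L[𝕜] N :=
  N.orthogonalProjectionOnto ∘L T ∘L N.subtypeL

theorem compression_comp_compression {T S : E →L[𝕜] E} (hS : ∀ x ∈ N, S x ∈ N) :
    N.compression T ∘L N.compression S = N.compression (T ∘L S) := by
  ext x
  simp [compression, starProjection_eq_self_iff.mpr (hS x x.2)]

theorem compression_neg_one : N.compression (-1) = -1 := by
  ext x
  simp [compression]

end Submodule

end InnerProductSpace

theorem stmt_5_general {H : Type*} [NormedAddCommGroup H] [InnerProductSpace ℂ H] [CompleteSpace H]
    (B0 B1 : H →L[ℂ] H) (hB0sa : IsSelfAdjoint B0) (hB1sa : IsSelfAdjoint B1)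
    (hB0c : ‖B0‖ ≤ 1) (hB1c : ‖B1‖ ≤ 1) (hle : B0 ≤ B1)
    (N : Submodule ℂ H) [CompleteSpace N]
    (hran : ∀ x : H, (B1 - B0) x ∈ N)
    (ξ : ℂ) (hξ : ¬(ξ.im = 0 ∧ -1 ≤ ξ.re ∧ ξ.re ≤ 1)) :
    let R := CFC.sqrt (B1 - B0)
    let Q0 : N →L[ℂ] N := N.orthogonalProjection ∘L
      (R ∘L Ring.inverse (B0 - ξ • 1) ∘L R + 1) ∘L N.subtypeL
    let Q1 : N →L[ℂ] N := N.orthogonalProjection ∘L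
      (R ∘L Ring.inverse (B1 - ξ • 1) ∘L R - 1) ∘L N.subtypeL
    Q0 ∘L Q1 = -1 ∧ Q1 ∘L Q0 = -1 := by
  intro R Q0 Q1
  have hunits : IsUnit (B0 - ξ • 1) ↔ IsUnit (B1 - ξ • 1) :=
    iff_of_true (hB0sa.isUnit_sub_smul_one hB0c hξ) (hB1sa.isUnit_sub_smul_one hB1c hξ)
  have hRR : R * R = B1 - B0 := CFC.sqrt_mul_sqrt_self _ (sub_nonneg.mpr hle)
  have hRN : ∀ x, R x ∈ N :=
    (IsSelfAdjoint.of_nonneg (CFC.sqrt_nonneg _)).apply_mem_of_mul_self_apply_mem (hRR ▸ hran)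
  rw [← sub_sub_sub_cancel_right B1 B0 (ξ • 1)] at hRR
  constructor
  · calc Q0 ∘L Q1 = N.compression ((R ∘L Ring.inverse (B0 - ξ • 1) ∘L R + 1) ∘L
          (R ∘L Ring.inverse (B1 - ξ • 1) ∘L R - 1)) :=
        N.compression_comp_compression fun x hx ↦ N.sub_mem (hRN _) hx
      _ = -1 :=
        (congrArg N.compression
          (Ring.mul_inverse_mul_add_one_mul_mul_inverse_mul_sub_one hunits hRR)).trans
          N.compression_neg_one
  · calc Q1 ∘L Q0 = N.compression ((R ∘L Ring.inverse (B1 - ξ • 1) ∘L R - 1) ∘L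
          (R ∘L Ring.inverse (B0 - ξ • 1) ∘L R + 1)) :=
        N.compression_comp_compression fun x hx ↦ N.add_mem (hRN _) hx
      _ = -1 :=
        (congrArg N.compression
          (Ring.mul_inverse_mul_sub_one_mul_mul_inverse_mul_add_one hunits hRR)).trans
          N.compression_neg_one

/-- For selfadjoint contractions `B̂₀ ≤ B̂₁` on `H` and a closed subspace `N` containing
`ran (B̂₁ − B̂₀)`, the Kreĭn–Ovcharenko type functions
`Q̂₀(ξ) = P_N [(B̂₁ − B̂₀)^{1/2} (B̂₀ − ξ)⁻¹ (B̂₁ − B̂₀)^{1/2} + I]↾N` and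
`Q̂₁(ξ) = P_N [(B̂₁ − B̂₀)^{1/2} (B̂₁ − ξ)⁻¹ (B̂₁ − B̂₀)^{1/2} − I]↾N`
satisfy `Q̂₀(ξ) Q̂₁(ξ) = Q̂₁(ξ) Q̂₀(ξ) = −I_N` for every `ξ ∈ ℂ \ [−1, 1]`. -/
theorem stmt_5 {H : Type*} [NormedAddCommGroup H] [InnerProductSpace ℂ H] [CompleteSpace H]
    (B0 B1 : H →L[ℂ] H) (hB0sa : IsSelfAdjoint B0) (hB1sa : IsSelfAdjoint B1)
    (hB0c : ‖B0‖ ≤ 1) (hB1c : ‖B1‖ ≤ 1) (hle : B0 ≤ B1)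
    (N : Submodule ℂ H) (hN : IsClosed (N : Set H)) [CompleteSpace N]
    (hran : ∀ x : H, (B1 - B0) x ∈ N)
    (ξ : ℂ) (hξ : ¬(ξ.im = 0 ∧ -1 ≤ ξ.re ∧ ξ.re ≤ 1)) :
    let R := CFC.sqrt (B1 - B0)
    let Q0 : N →L[ℂ] N := N.orthogonalProjection ∘L
      (R ∘L Ring.inverse (B0 - ξ • 1) ∘L R + 1) ∘L N.subtypeL
    let Q1 : N →L[ℂ] N := N.orthogonalProjection ∘L
      (R ∘L Ring.inverse (B1 - ξ • 1) ∘L R - 1) ∘L N.subtypeL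
    Q0 ∘L Q1 = -1 ∧ Q1 ∘L Q0 = -1 :=
  stmt_5_general B0 B1 hB0sa hB1sa hB0c hB1c hle N hran ξ hξ
end

section
/- Assume the exit-space setup with closure ran D_{K0*} = N, and let X = [[X₁₁, X₁₂], [X₁₂*, X₂₂]] be a selfadjoint contraction on N ⊕ 𝓗. Then for every u ∈ H ⊕ 𝓗 the following two identities of infima hold: inf over f₀ ∈ H₀ and h ∈ 𝓗 of ⟨(I + B̃_X)(u + (f₀,0,0) + (0,0,h)), u + (f₀,0,0) + (0,0,h)⟩ equals inf over h ∈ 𝓗 of ⟨(I + X)(D_{K0*} P_N u, h), (D_{K0*} P_N u, h)⟩; and the same identity holds with I + B̃_X and I + X replaced by I − B̃_X and I − X respectively. (These identities express that the Kreĭn shorted operator (I + B̃_X)_N equals B̂₀ − B_μ and (I − B̃_X)_N equals B_M − B̂₁.) -/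
/-!
With `S = (I + B₀)^{1/2}` and `T = (I - B₀)^{1/2}`, so that `T S = S T = D_{B₀}`, the quadratic
form of `I + B̃_X` at `(f, n, h)` splits as
`‖S f + T K₀* n‖² + ⟨(I + X)(D_{K₀*} n, h), (D_{K₀*} n, h)⟩`.
As `S` and `T` commute, `T` maps `ker S` into `ker D_{B₀} ⊆ ker K₀`, so `T K₀* n` is orthogonal to
`ker S`, i.e. lies in the closure of `ran S`: the first term has infimum `0` over `f ∈ H₀`.
-/

open ContinuousLinearMap Complex Filter
open scoped InnerProductSpace Topology

set_option synthInstance.maxHeartbeats 1000000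
set_option maxHeartbeats 1000000

noncomputable section

variable {E F : Type*} [NormedAddCommGroup E] [InnerProductSpace ℂ E]
  [NormedAddCommGroup F] [InnerProductSpace ℂ F]

/-- The 2×2 block operator `[[A, B], [C, D]]` on the Hilbert space orthogonal direct sum
`E ⊕ F` (realized as `WithLp 2 (E × F)`), acting by `(e, f) ↦ (A e + B f, C e + D f)`. -/
def blk (A : E →L[ℂ] E) (B : F →L[ℂ] E) (C : E →L[ℂ] F) (D : F →L[ℂ] F) :
    WithLp 2 (E × F) →L[ℂ] WithLp 2 (E × F) :=
  ((WithLp.prodContinuousLinearEquiv 2 ℂ E F).symm : E × F →L[ℂ] WithLp 2 (E × F)) ∘L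
    ((A.coprod B).prod (C.coprod D)) ∘L
    ((WithLp.prodContinuousLinearEquiv 2 ℂ E F) : WithLp 2 (E × F) →L[ℂ] E × F)

/-- The isometric embedding of the first summand `E` into `E ⊕ F`. -/
def inl2 : E →L[ℂ] WithLp 2 (E × F) :=
  ((WithLp.prodContinuousLinearEquiv 2 ℂ E F).symm : E × F →L[ℂ] WithLp 2 (E × F)) ∘L
    .inl ℂ E F

/-- The isometric embedding of the second summand `F` into `E ⊕ F`. -/
def inr2 : F →L[ℂ] WithLp 2 (E × F) :=
  ((WithLp.prodContinuousLinearEquiv 2 ℂ E F).symm : E × F →L[ℂ] WithLp 2 (E × F)) ∘L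
    .inr ℂ E F

/-- The orthogonal projection of `E ⊕ F` onto the first summand `E`. -/
def fst2 : WithLp 2 (E × F) →L[ℂ] E :=
  .fst ℂ E F ∘L ((WithLp.prodContinuousLinearEquiv 2 ℂ E F) : WithLp 2 (E × F) →L[ℂ] E × F)

/-- The orthogonal projection of `E ⊕ F` onto the second summand `F`. -/
def snd2 : WithLp 2 (E × F) →L[ℂ] F :=
  .snd ℂ E F ∘L ((WithLp.prodContinuousLinearEquiv 2 ℂ E F) : WithLp 2 (E × F) →L[ℂ] E × F)

/-- The element `(e, f)` of the orthogonal direct sum `E ⊕ F`. -/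
def mk2 (e : E) (f : F) : WithLp 2 (E × F) :=
  (WithLp.prodContinuousLinearEquiv 2 ℂ E F).symm (e, f)

section BlockOperators

lemma fst2_mk2 (e : E) (f : F) : fst2 (mk2 e f) = e := rfl

lemma snd2_mk2 (e : E) (f : F) : snd2 (mk2 e f) = f := rfl

lemma blk_apply (A : E →L[ℂ] E) (B : F →L[ℂ] E) (C : E →L[ℂ] F) (D : F →L[ℂ] F)
    (x : WithLp 2 (E × F)) :
    blk A B C D x = mk2 (A (fst2 x) + B (snd2 x)) (C (fst2 x) + D (snd2 x)) := rfl

lemma mk2_add (e e' : E) (f f' : F) : mk2 e f + mk2 e' f' = mk2 (e + e') (f + f') := rfl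

lemma mk2_fst2_snd2 (x : WithLp 2 (E × F)) : mk2 (fst2 x) (snd2 x) = x := rfl

lemma inl2_eq_mk2 (e : E) : (inl2 e : WithLp 2 (E × F)) = mk2 e 0 := rfl

lemma inr2_eq_mk2 (f : F) : (inr2 f : WithLp 2 (E × F)) = mk2 0 f := rfl

lemma add_inl2_inl2_add_inr2 {G : Type*} [NormedAddCommGroup G] [InnerProductSpace ℂ G]
    (u : WithLp 2 (WithLp 2 (E × F) × G)) (e : E) (g : G) :
    u + inl2 (inl2 e) + inr2 g = mk2 (mk2 (fst2 (fst2 u) + e) (snd2 (fst2 u))) (snd2 u + g) := by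
  conv_lhs => rw [← mk2_fst2_snd2 u, ← mk2_fst2_snd2 (fst2 u)]
  simp only [inl2_eq_mk2, inr2_eq_mk2, mk2_add, add_zero]

lemma inner_mk2 (a c : E) (b d : F) :
    ⟪mk2 a b, mk2 c d⟫_ℂ = ⟪a, c⟫_ℂ + ⟪b, d⟫_ℂ :=
  WithLp.prod_inner_apply _ _

lemma blk_neg (A : E →L[ℂ] E) (B : F →L[ℂ] E) (C : E →L[ℂ] F) (D : F →L[ℂ] F) :
    blk (-A) (-B) (-C) (-D) = -blk A B C D := by
  ext x
  simp only [blk_apply, neg_apply, ← neg_add]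
  rfl

end BlockOperators

lemma iInf_prod_add_eq_iInf {α β : Type*} [Nonempty α] [Nonempty β] {a : α → ℝ} {b : β → ℝ}
    (ha : ∀ x, 0 ≤ a x) (ha_inf : ∀ ε > 0, ∃ x, a x < ε) (hb : BddBelow (Set.range b)) :
    ⨅ p : α × β, (a p.1 + b p.2) = ⨅ y, b y := by
  have hab : BddBelow (Set.range fun p : α × β => a p.1 + b p.2) := by
    obtain ⟨c, hc⟩ := hb
    exact ⟨c, by rintro _ ⟨p, rfl⟩; linarith [ha p.1, hc ⟨p.2, rfl⟩]⟩
  refine le_antisymm (le_ciInf fun y => le_of_forall_pos_le_add fun ε hε => ?_)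
    (le_ciInf fun p => (ciInf_le hb p.2).trans (le_add_of_nonneg_left (ha p.1)))
  obtain ⟨x, hx⟩ := ha_inf ε hε
  calc ⨅ p : α × β, (a p.1 + b p.2) ≤ a x + b y := ciInf_le hab (x, y)
    _ ≤ b y + ε := by linarith

lemma CFC.exists_sqrt_one_add_sqrt_one_sub {A : Type*} [CStarAlgebra A] [PartialOrder A]
    [StarOrderedRing A] {a : A} (ha : IsSelfAdjoint a) (ha1 : ‖a‖ ≤ 1) :
    ∃ S T : A, IsSelfAdjoint S ∧ IsSelfAdjoint T ∧ S * S = 1 + a ∧ T * T = 1 - a ∧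
      T * S = CFC.sqrt (1 - a ^ 2) ∧ S * T = CFC.sqrt (1 - a ^ 2) := by
  have hspec : ∀ x ∈ spectrum ℝ a, -1 ≤ x ∧ x ≤ 1 := by
    intro x hx
    rcases subsingleton_or_nontrivial A with _ | _
    · simp [spectrum.of_subsingleton] at hx
    · exact abs_le.mp ((spectrum.norm_le_norm_of_mem hx).trans ha1)
  have hprod : CFC.sqrt (1 - a ^ 2) = cfc (fun x : ℝ => √(1 - x) * √(1 + x)) a := by
    refine CFC.sqrt_unique ?_ (cfc_nonneg fun x _ => by positivity)
    rw [← cfc_mul .., cfc_congr (g := fun x : ℝ => 1 - x ^ 2) fun x hx => ?_,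
      cfc_sub .., cfc_const_one .., cfc_pow .., cfc_id' ..]
    obtain ⟨h1, h2⟩ := hspec x hx
    rw [mul_mul_mul_comm, Real.mul_self_sqrt (by linarith), Real.mul_self_sqrt (by linarith)]
    ring
  refine ⟨cfc (fun x : ℝ => √(1 + x)) a, cfc (fun x : ℝ => √(1 - x)) a, cfc_predicate _ _,
    cfc_predicate _ _, ?_, ?_, ?_, ?_⟩
  · rw [← cfc_mul .., cfc_congr (g := fun x : ℝ => 1 + x)
      fun x hx => Real.mul_self_sqrt (by linarith [(hspec x hx).1]),
      cfc_add .., cfc_const_one .., cfc_id' ..]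
  · rw [← cfc_mul .., cfc_congr (g := fun x : ℝ => 1 - x)
      fun x hx => Real.mul_self_sqrt (by linarith [(hspec x hx).2]),
      cfc_sub .., cfc_const_one .., cfc_id' ..]
  · rw [hprod, cfc_mul ..]
  · rw [hprod, ← cfc_mul ..]
    exact cfc_congr fun x _ => mul_comm _ _

lemma re_inner_self_eq_norm_sq (w : E) : (⟪w, w⟫_ℂ).re = ‖w‖ ^ 2 :=
  inner_self_eq_norm_sq (𝕜 := ℂ) w

namespace ContinuousLinearMap

lemma re_inner_one_add_apply_self_nonneg {X : E →L[ℂ] E} (hX : ‖X‖ ≤ 1) (w : E) :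
    0 ≤ (⟪(1 + X) w, w⟫_ℂ).re := by
  have h1 : -(‖X w‖ * ‖w‖) ≤ (⟪X w, w⟫_ℂ).re :=
    neg_le_of_abs_le ((Complex.abs_re_le_norm _).trans (norm_inner_le_norm _ _))
  have h2 : ‖X w‖ ≤ 1 * ‖w‖ := X.le_of_opNorm_le hX w
  rw [add_apply, one_apply_eq_self, inner_add_left, Complex.add_re, re_inner_self_eq_norm_sq]
  nlinarith [norm_nonneg w]

variable [CompleteSpace E] [CompleteSpace F]

lemma inner_apply_comm_of_isSelfAdjoint {S : E →L[ℂ] E} (hS : IsSelfAdjoint S) (x y : E) :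
    ⟪S x, y⟫_ℂ = ⟪x, S y⟫_ℂ :=
  hS.isSymmetric x y

lemma inner_apply_self_of_isSelfAdjoint {S : E →L[ℂ] E} (hS : IsSelfAdjoint S) (x : E) :
    ⟪S x, S x⟫_ℂ = ⟪(S * S) x, x⟫_ℂ := by
  rw [mul_apply_eq_comp, ← inner_apply_comm_of_isSelfAdjoint hS]

lemma one_sub_comp_adjoint_nonneg {K : E →L[ℂ] F} (hK : ‖K‖ ≤ 1) :
    0 ≤ 1 - K ∘L adjoint K := by
  have hpos : 0 ≤ K ∘L adjoint K := (nonneg_iff_isPositive _).mpr (isPositive_self_comp_adjoint K)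
  have hnorm : ‖K ∘L adjoint K‖ ≤ 1 := by
    have h := norm_adjoint_comp_self (adjoint K)
    rw [adjoint_adjoint, LinearIsometryEquiv.norm_map] at h
    rw [h]
    exact mul_le_one₀ hK (norm_nonneg K) hK
  exact sub_nonneg.mpr ((CStarAlgebra.norm_le_one_iff_of_nonneg _).mp hnorm)

lemma exists_norm_apply_add_lt {S : E →L[ℂ] E} (hS : IsSelfAdjoint S) {c : E}
    (hc : c ∈ S.kerᗮ) {ε : ℝ} (hε : 0 < ε) : ∃ f, ‖S f + c‖ < ε := by
  rw [orthogonal_ker, hS.adjoint_eq] at hc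
  obtain ⟨_, ⟨f, rfl⟩, hf⟩ := Metric.mem_closure_iff.mp (neg_mem hc) ε hε
  exact ⟨f, by rwa [dist_eq_norm, ← norm_neg, neg_sub, sub_neg_eq_add] at hf⟩

lemma apply_adjoint_mem_orthogonal_ker {S T D : E →L[ℂ] E} {K : E →L[ℂ] F}
    (hT : IsSelfAdjoint T) (hTS : T * S = D) (hST : S * T = D) (hker : ∀ x, D x = 0 → K x = 0)
    (y : F) : T (adjoint K y) ∈ S.kerᗮ := by
  rw [Submodule.mem_orthogonal]
  intro x hx
  have hSx : S x = 0 := hx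
  have hDTx : D (T x) = 0 := by
    rw [← hTS, mul_apply_eq_comp, ← mul_apply_eq_comp S, hST, ← hTS, mul_apply_eq_comp, hSx,
      map_zero, map_zero]
  rw [← inner_apply_comm_of_isSelfAdjoint hT, adjoint_inner_right, hker _ hDTx, inner_zero_left]

end ContinuousLinearMap

section ExitSpace

variable {H₀ N 𝓗 : Type*}
  [NormedAddCommGroup H₀] [InnerProductSpace ℂ H₀] [CompleteSpace H₀]
  [NormedAddCommGroup N] [InnerProductSpace ℂ N] [CompleteSpace N]
  [NormedAddCommGroup 𝓗] [InnerProductSpace ℂ 𝓗] [CompleteSpace 𝓗]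

/-- `B̃_X`, with `D_{B₀}` and `D_{K₀*}` as parameters: they do not change when `(B₀, K₀, X)` is
replaced by `(-B₀, -K₀, -X)`. -/
def exitExtension (B₀ DB : H₀ →L[ℂ] H₀) (K₀ : H₀ →L[ℂ] N) (DK X11 : N →L[ℂ] N) (X12 : 𝓗 →L[ℂ] N)
    (X22 : 𝓗 →L[ℂ] 𝓗) :
    WithLp 2 (WithLp 2 (H₀ × N) × 𝓗) →L[ℂ] WithLp 2 (WithLp 2 (H₀ × N) × 𝓗) :=
  blk (blk B₀ (DB ∘L adjoint K₀) (K₀ ∘L DB) (-(K₀ ∘L B₀ ∘L adjoint K₀) + DK ∘L X11 ∘L DK))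
    (inr2 ∘L DK ∘L X12) (adjoint X12 ∘L DK ∘L snd2) X22

lemma exitExtension_neg (B₀ DB : H₀ →L[ℂ] H₀) (K₀ : H₀ →L[ℂ] N) (DK X11 : N →L[ℂ] N)
    (X12 : 𝓗 →L[ℂ] N) (X22 : 𝓗 →L[ℂ] 𝓗) :
    exitExtension (-B₀) DB (-K₀) DK (-X11) (-X12) (-X22) = -exitExtension B₀ DB K₀ DK X11 X12 X22 := by
  rw [exitExtension, exitExtension, ← blk_neg, ← blk_neg]
  congr 1 <;> simp [comp_neg, map_neg, add_comm]

lemma inner_one_add_exitExtension_mk2 {B₀ DB S T : H₀ →L[ℂ] H₀} {K₀ : H₀ →L[ℂ] N} {DK : N →L[ℂ] N}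
    (hS : IsSelfAdjoint S) (hT : IsSelfAdjoint T) (hS2 : S * S = 1 + B₀) (hT2 : T * T = 1 - B₀)
    (hTS : T * S = DB) (hST : S * T = DB) (hDK : IsSelfAdjoint DK)
    (hDK2 : DK * DK = 1 - K₀ ∘L adjoint K₀) (X11 : N →L[ℂ] N) (X12 : 𝓗 →L[ℂ] N)
    (X22 : 𝓗 →L[ℂ] 𝓗) (f : H₀) (n : N) (h : 𝓗) :
    ⟪(1 + exitExtension B₀ DB K₀ DK X11 X12 X22) (mk2 (mk2 f n) h), mk2 (mk2 f n) h⟫_ℂ =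
      ⟪S f + T (adjoint K₀ n), S f + T (adjoint K₀ n)⟫_ℂ +
        ⟪(1 + blk X11 X12 (adjoint X12) X22) (mk2 (DK n) h), mk2 (DK n) h⟫_ℂ := by
  set k := adjoint K₀ n
  have hSf : ⟪S f, S f⟫_ℂ = ⟪f, f⟫_ℂ + ⟪B₀ f, f⟫_ℂ := by
    rw [inner_apply_self_of_isSelfAdjoint hS, hS2, add_apply, one_apply_eq_self, inner_add_left]
  have hTk : ⟪T k, T k⟫_ℂ = ⟪k, k⟫_ℂ - ⟪B₀ k, k⟫_ℂ := by
    rw [inner_apply_self_of_isSelfAdjoint hT, hT2, sub_apply, one_apply_eq_self, inner_sub_left]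
  have hDKn : ⟪DK n, DK n⟫_ℂ = ⟪n, n⟫_ℂ - ⟪k, k⟫_ℂ := by
    rw [inner_apply_self_of_isSelfAdjoint hDK, hDK2, sub_apply, one_apply_eq_self, comp_apply,
      inner_sub_left, ← adjoint_inner_right]
  have hSfTk : ⟪S f, T k⟫_ℂ = ⟪K₀ (DB f), n⟫_ℂ := by
    rw [← inner_apply_comm_of_isSelfAdjoint hT, ← mul_apply_eq_comp, hTS, adjoint_inner_right]
  have hTkSf : ⟪T k, S f⟫_ℂ = ⟪DB k, f⟫_ℂ := by
    rw [← inner_apply_comm_of_isSelfAdjoint hS, ← mul_apply_eq_comp, hST]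
  have hKBk : ⟪K₀ (B₀ k), n⟫_ℂ = ⟪B₀ k, k⟫_ℂ := (adjoint_inner_right _ _ _).symm
  have hX11 : ⟪X11 (DK n), DK n⟫_ℂ = ⟪DK (X11 (DK n)), n⟫_ℂ := (hDK.isSymmetric _ _).symm
  have hX12 : ⟪X12 h, DK n⟫_ℂ = ⟪DK (X12 h), n⟫_ℂ := (hDK.isSymmetric _ _).symm
  simp only [exitExtension, add_apply, one_apply_eq_self, blk_apply, fst2_mk2, snd2_mk2, mk2_add,
    comp_apply, neg_apply, inr2_eq_mk2, inner_mk2, inner_add_left, inner_add_right,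
    inner_neg_left, add_zero]
  rw [hSf, hTk, hDKn, hSfTk, hTkSf, hKBk, hX11, hX12]
  ring

theorem iInf_re_inner_one_add_exitExtension {B₀ : H₀ →L[ℂ] H₀} (hB₀ : IsSelfAdjoint B₀)
    (hB₀1 : ‖B₀‖ ≤ 1) {K₀ : H₀ →L[ℂ] N}
    (hker : ∀ x, (CFC.sqrt (1 - B₀ ^ 2) : H₀ →L[ℂ] H₀) x = 0 → K₀ x = 0)
    {DK : N →L[ℂ] N} (hDK : IsSelfAdjoint DK) (hDK2 : DK * DK = 1 - K₀ ∘L adjoint K₀)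
    {X11 : N →L[ℂ] N} {X12 : 𝓗 →L[ℂ] N} {X22 : 𝓗 →L[ℂ] 𝓗}
    (hX : ‖blk X11 X12 (adjoint X12) X22‖ ≤ 1) (u : WithLp 2 (WithLp 2 (H₀ × N) × 𝓗)) :
    ⨅ p : H₀ × 𝓗, (⟪(1 + exitExtension B₀ (CFC.sqrt (1 - B₀ ^ 2)) K₀ DK X11 X12 X22)
        (u + inl2 (inl2 p.1) + inr2 p.2), u + inl2 (inl2 p.1) + inr2 p.2⟫_ℂ).re =
      ⨅ h : 𝓗, (⟪(1 + blk X11 X12 (adjoint X12) X22) (mk2 (DK (snd2 (fst2 u))) h),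
        mk2 (DK (snd2 (fst2 u))) h⟫_ℂ).re := by
  obtain ⟨S, T, hS, hT, hS2, hT2, hTS, hST⟩ := CFC.exists_sqrt_one_add_sqrt_one_sub hB₀ hB₀1
  set BX := exitExtension B₀ (CFC.sqrt (1 - B₀ ^ 2)) K₀ DK X11 X12 X22
  set X := blk X11 X12 (adjoint X12) X22
  set n := snd2 (fst2 u)
  set c := T (adjoint K₀ n)
  have hc : c ∈ S.kerᗮ := apply_adjoint_mem_orthogonal_ker hT hTS hST hker n
  simp only [add_inl2_inl2_add_inr2]
  calc _ = ⨅ p : H₀ × 𝓗, (⟪(1 + BX) (mk2 (mk2 p.1 n) p.2), mk2 (mk2 p.1 n) p.2⟫_ℂ).re :=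
        (Equiv.addLeft (fst2 (fst2 u), snd2 u)).iInf_comp
          (g := fun p : H₀ × 𝓗 => (⟪(1 + BX) (mk2 (mk2 p.1 n) p.2), mk2 (mk2 p.1 n) p.2⟫_ℂ).re)
    _ = ⨅ p : H₀ × 𝓗, (‖S p.1 + c‖ ^ 2 + (⟪(1 + X) (mk2 (DK n) p.2), mk2 (DK n) p.2⟫_ℂ).re) := by
        refine iInf_congr fun p => ?_
        rw [inner_one_add_exitExtension_mk2 hS hT hS2 hT2 hTS hST hDK hDK2, Complex.add_re,
          re_inner_self_eq_norm_sq]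
    _ = _ := by
        refine iInf_prod_add_eq_iInf (a := fun f => ‖S f + c‖ ^ 2)
          (b := fun h => (⟪(1 + X) (mk2 (DK n) h), mk2 (DK n) h⟫_ℂ).re)
          (fun _ => sq_nonneg _) (fun ε hε => ?_)
          ⟨0, by rintro _ ⟨h, rfl⟩; exact re_inner_one_add_apply_self_nonneg hX _⟩
        obtain ⟨f, hf⟩ := exists_norm_apply_add_lt hS hc (Real.sqrt_pos.mpr hε)
        exact ⟨f, (Real.lt_sqrt (norm_nonneg _)).mp hf⟩

end ExitSpace

theorem stmt_6_general {H₀ N 𝓗 : Type*}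
    [NormedAddCommGroup H₀] [InnerProductSpace ℂ H₀] [CompleteSpace H₀]
    [NormedAddCommGroup N] [InnerProductSpace ℂ N] [CompleteSpace N]
    [NormedAddCommGroup 𝓗] [InnerProductSpace ℂ 𝓗] [CompleteSpace 𝓗]
    (B₀ : H₀ →L[ℂ] H₀) (hB₀sa : IsSelfAdjoint B₀) (hB₀c : ‖B₀‖ ≤ 1)
    (K₀ : H₀ →L[ℂ] N) (hK₀c : ‖K₀‖ ≤ 1)
    (hker : LinearMap.ker (((CFC.sqrt (1 - B₀ ^ 2) : H₀ →L[ℂ] H₀)) : H₀ →ₗ[ℂ] H₀) ≤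
      LinearMap.ker (K₀ : H₀ →ₗ[ℂ] N))
    (X11 : N →L[ℂ] N) (X12 : 𝓗 →L[ℂ] N) (X22 : 𝓗 →L[ℂ] 𝓗)
    (hXc : ‖blk X11 X12 (adjoint X12) X22‖ ≤ 1) :
    let DB := CFC.sqrt (1 - B₀ ^ 2)
    let DK := CFC.sqrt (1 - K₀ ∘L adjoint K₀)
    let Ct : WithLp 2 (H₀ × N) →L[ℂ] WithLp 2 (H₀ × N) :=
      blk B₀ (DB ∘L adjoint K₀) (K₀ ∘L DB)
        (-(K₀ ∘L B₀ ∘L adjoint K₀) + DK ∘L X11 ∘L DK)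
    let BX := blk Ct (inr2 ∘L DK ∘L X12) (adjoint X12 ∘L DK ∘L snd2) X22
    (∀ u : WithLp 2 (WithLp 2 (H₀ × N) × 𝓗),
      (⨅ p : H₀ × 𝓗,
        (⟪(1 + BX) (u + inl2 (inl2 p.1) + inr2 p.2),
            u + inl2 (inl2 p.1) + inr2 p.2⟫_ℂ).re) =
      ⨅ h : 𝓗,
        (⟪(1 + blk X11 X12 (adjoint X12) X22) (mk2 (DK (snd2 (fst2 u))) h),
            mk2 (DK (snd2 (fst2 u))) h⟫_ℂ).re) ∧
    (∀ u : WithLp 2 (WithLp 2 (H₀ × N) × 𝓗),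
      (⨅ p : H₀ × 𝓗,
        (⟪(1 - BX) (u + inl2 (inl2 p.1) + inr2 p.2),
            u + inl2 (inl2 p.1) + inr2 p.2⟫_ℂ).re) =
      ⨅ h : 𝓗,
        (⟪(1 - blk X11 X12 (adjoint X12) X22) (mk2 (DK (snd2 (fst2 u))) h),
            mk2 (DK (snd2 (fst2 u))) h⟫_ℂ).re) := by
  intro DB DK Ct BX
  have hDK : IsSelfAdjoint DK := .of_nonneg (CFC.sqrt_nonneg _)
  have hDK2 : DK * DK = 1 - K₀ ∘L adjoint K₀ :=
    CFC.sqrt_mul_sqrt_self _ (one_sub_comp_adjoint_nonneg hK₀c)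
  have hXneg : blk (-X11) (-X12) (adjoint (-X12)) (-X22) = -blk X11 X12 (adjoint X12) X22 := by
    rw [map_neg, blk_neg]
  refine ⟨iInf_re_inner_one_add_exitExtension hB₀sa hB₀c (fun x hx => hker hx) hDK hDK2 hXc, fun u => ?_⟩
  -- `I - B̃_X` is `I + B̃_X` for the data `(-B₀, -K₀, -X)`, which satisfy the same hypotheses
  have hminus := iInf_re_inner_one_add_exitExtension hB₀sa.neg (by rwa [norm_neg]) (K₀ := -K₀)
    (fun x hx => neg_eq_zero.mpr (hker (by rwa [neg_sq] at hx))) hDK (by simpa using hDK2)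
    (by rwa [hXneg, norm_neg]) u
  rwa [neg_sq, exitExtension_neg, hXneg, ← sub_eq_add_neg, ← sub_eq_add_neg] at hminus

/-- Exit-space formula for shorted operators: for a selfadjoint contractive extension
`B̃_X` of the Hermitian contraction `B = B₀ + K₀ D_{B₀}` (with `closure ran D_{K₀*} = N`),
the quadratic forms of the Kreĭn shorted operators `(I ± B̃_X)_N` coincide with those of
`(I ± X)` shortened via `D_{K₀*} P_N`; this expresses `(I + B̃_X)_N = B̂₀ − B_μ` and
`(I − B̃_X)_N = B_M − B̂₁`. -/
theorem stmt_6 {H₀ N 𝓗 : Type*}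
    [NormedAddCommGroup H₀] [InnerProductSpace ℂ H₀] [CompleteSpace H₀]
    [TopologicalSpace.SeparableSpace H₀]
    [NormedAddCommGroup N] [InnerProductSpace ℂ N] [CompleteSpace N]
    [TopologicalSpace.SeparableSpace N]
    [NormedAddCommGroup 𝓗] [InnerProductSpace ℂ 𝓗] [CompleteSpace 𝓗]
    [TopologicalSpace.SeparableSpace 𝓗]
    (B₀ : H₀ →L[ℂ] H₀) (hB₀sa : IsSelfAdjoint B₀) (hB₀c : ‖B₀‖ ≤ 1)
    (K₀ : H₀ →L[ℂ] N) (hK₀c : ‖K₀‖ ≤ 1)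
    (hker : LinearMap.ker (((CFC.sqrt (1 - B₀ ^ 2) : H₀ →L[ℂ] H₀)) : H₀ →ₗ[ℂ] H₀) ≤
      LinearMap.ker (K₀ : H₀ →ₗ[ℂ] N))
    (hdense :
      (LinearMap.range (((CFC.sqrt (1 - K₀ ∘L adjoint K₀) : N →L[ℂ] N)) : N →ₗ[ℂ] N)).topologicalClosure = ⊤)
    (X11 : N →L[ℂ] N) (X12 : 𝓗 →L[ℂ] N) (X22 : 𝓗 →L[ℂ] 𝓗)
    (hXsa : IsSelfAdjoint (blk X11 X12 (adjoint X12) X22))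
    (hXc : ‖blk X11 X12 (adjoint X12) X22‖ ≤ 1) :
    let DB := CFC.sqrt (1 - B₀ ^ 2)
    let DK := CFC.sqrt (1 - K₀ ∘L adjoint K₀)
    let Ct : WithLp 2 (H₀ × N) →L[ℂ] WithLp 2 (H₀ × N) :=
      blk B₀ (DB ∘L adjoint K₀) (K₀ ∘L DB)
        (-(K₀ ∘L B₀ ∘L adjoint K₀) + DK ∘L X11 ∘L DK)
    let BX := blk Ct (inr2 ∘L DK ∘L X12) (adjoint X12 ∘L DK ∘L snd2) X22
    (∀ u : WithLp 2 (WithLp 2 (H₀ × N) × 𝓗),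
      (⨅ p : H₀ × 𝓗,
        (⟪(1 + BX) (u + inl2 (inl2 p.1) + inr2 p.2),
            u + inl2 (inl2 p.1) + inr2 p.2⟫_ℂ).re) =
      ⨅ h : 𝓗,
        (⟪(1 + blk X11 X12 (adjoint X12) X22) (mk2 (DK (snd2 (fst2 u))) h),
            mk2 (DK (snd2 (fst2 u))) h⟫_ℂ).re) ∧
    (∀ u : WithLp 2 (WithLp 2 (H₀ × N) × 𝓗),
      (⨅ p : H₀ × 𝓗,
        (⟪(1 - BX) (u + inl2 (inl2 p.1) + inr2 p.2),
            u + inl2 (inl2 p.1) + inr2 p.2⟫_ℂ).re) =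
      ⨅ h : 𝓗,
        (⟪(1 - blk X11 X12 (adjoint X12) X22) (mk2 (DK (snd2 (fst2 u))) h),
            mk2 (DK (snd2 (fst2 u))) h⟫_ℂ).re) :=
  stmt_6_general B₀ hB₀sa hB₀c K₀ hK₀c hker X11 X12 X22 hXc
end
end

section
/- Let K be an infinite-dimensional separable complex Hilbert space and let Ẑ₀ and Ẑ₁ be selfadjoint contractions on K with Ẑ₀ ≤ Ẑ₁ such that ran(Ẑ₁ − Ẑ₀)^{1/2} ∩ ran(I + Ẑ₀)^{1/2} = {0}, ran(Ẑ₁ − Ẑ₀)^{1/2} ∩ ran(I − Ẑ₁)^{1/2} = {0}, and ker(Ẑ₁ − Ẑ₀) = {0}. Then there exists a selfadjoint contraction X = [[X₁₁, X₁₂], [X₁₂*, X₂₂]] on K ⊕ K such that: (1) ran(I + X)^{1/2} ∩ ({0} ⊕ K) = {0} and ran(I − X)^{1/2} ∩ ({0} ⊕ K) = {0}; (2) ‖X₂₂‖ < 1; and (3) Ẑ₀ = X₁₁ − X₁₂ (I + X₂₂)^{-1} X₁₂* and Ẑ₁ = X₁₁ + X₁₂ (I − X₂₂)^{-1} X₁₂*.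 -/
/-!
Take `X₂₂ = 0`, `X₁₁ = (Ẑ₀ + Ẑ₁)/2` and `X₁₂ = ((Ẑ₁ - Ẑ₀)/2)^{1/2}`, so that both formulas in (3)
read `X₁₁ ∓ X₁₂²`. Then `I + X = T*T` with `T = [[(I + Ẑ₀)^{1/2}, 0], [X₁₂, I]]`, hence
`ran (I + X)^{1/2} ⊆ ran T*` by Douglas' lemma. If `T* v = ((I + Ẑ₀)^{1/2} v₁ + X₁₂ v₂, v₂)` lies in
`{0} ⊕ K`, then `X₁₂ v₂ ∈ ran (I + Ẑ₀)^{1/2} ∩ ran (Ẑ₁ - Ẑ₀)^{1/2} = {0}`, so `v₂ = 0` because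
`ker (Ẑ₁ - Ẑ₀) = {0}`. The same argument with `-X₁₂` and `(I - Ẑ₁)^{1/2}` handles `I - X`, and
`-I ≤ X ≤ I` because `I ± X` are both of the form `T*T`.
-/

open ContinuousLinearMap Complex Filter
open scoped InnerProductSpace Topology

set_option synthInstance.maxHeartbeats 1000000
set_option maxHeartbeats 1000000

noncomputable section

variable {E F : Type*} [NormedAddCommGroup E] [InnerProductSpace ℂ E]
  [NormedAddCommGroup F] [InnerProductSpace ℂ F]

lemma IsSelfAdjoint.norm_le_one_iff {A : Type*} [CStarAlgebra A] [PartialOrder A]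
    [StarOrderedRing A] {a : A} (ha : IsSelfAdjoint a) : ‖a‖ ≤ 1 ↔ 0 ≤ 1 + a ∧ 0 ≤ 1 - a := by
  obtain h | h := subsingleton_or_nontrivial A
  · simp [Subsingleton.elim a 0]
  have hlo : 0 ≤ 1 + a ↔ ∀ x ∈ spectrum ℝ a, -1 ≤ x := by
    simpa [neg_le_iff_add_nonneg'] using algebraMap_le_iff_le_spectrum (r := (-1 : ℝ)) ha
  have hhi : 0 ≤ 1 - a ↔ ∀ x ∈ spectrum ℝ a, x ≤ 1 := by
    simpa [sub_nonneg] using le_algebraMap_iff_spectrum_le (r := (1 : ℝ)) ha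
  rw [hlo, hhi]
  refine ⟨fun hn => ⟨fun x hx => ?_, fun x hx => ?_⟩, fun ⟨hl, hh⟩ => ?_⟩
  · have := (Real.norm_eq_abs x ▸ spectrum.norm_le_norm_of_mem hx).trans hn
    linarith [neg_abs_le x]
  · have := (Real.norm_eq_abs x ▸ spectrum.norm_le_norm_of_mem hx).trans hn
    linarith [le_abs_self x]
  · rcases CStarAlgebra.norm_or_neg_norm_mem_spectrum ha with hmem | hmem
    · exact hh _ hmem
    · linarith [hl _ hmem]

section Range

variable {H G : Type*} [NormedAddCommGroup H] [InnerProductSpace ℂ H] [CompleteSpace H]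
  [NormedAddCommGroup G] [InnerProductSpace ℂ G] [CompleteSpace G]

lemma adjoint_comp_self_nonneg (T : H →L[ℂ] G) : 0 ≤ adjoint T ∘L T :=
  (nonneg_iff_isPositive _).2 (isPositive_adjoint_comp_self T)

/-- Douglas' lemma, one direction: `x ↦ ⟪y, x⟫` factors through `T` with bound `c`, and a
Hahn–Banach extension of the factor to `G` is `⟪z, ·⟫` for some `z` with `T† z = y`. -/
lemma mem_range_adjoint_of_norm_inner_le (T : H →L[ℂ] G) (y : H) (c : ℝ)
    (h : ∀ x, ‖⟪y, x⟫_ℂ‖ ≤ c * ‖T x‖) : y ∈ Set.range (adjoint T) := by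
  have hker : LinearMap.ker (T : H →ₗ[ℂ] G) ≤ LinearMap.ker (innerₛₗ ℂ y) := fun x hx => by
    simpa [show T x = 0 from hx] using h x
  let φ : LinearMap.range (T : H →ₗ[ℂ] G) →ₗ[ℂ] ℂ :=
    (LinearMap.ker (T : H →ₗ[ℂ] G)).liftQ _ hker ∘ₗ (T : H →ₗ[ℂ] G).quotKerEquivRange.symm
  have hφ : ∀ x, φ ⟨T x, LinearMap.mem_range_self _ x⟩ = ⟪y, x⟫_ℂ := fun x => by
    have hmk : (T : H →ₗ[ℂ] G).quotKerEquivRange.symm ⟨T x, LinearMap.mem_range_self _ x⟩ =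
        Submodule.Quotient.mk x := (LinearEquiv.symm_apply_eq _).2 rfl
    simp [φ, hmk]
  have hbound : ∀ v, ‖φ v‖ ≤ c * ‖v‖ := by
    rintro ⟨_, x, rfl⟩
    simpa [hφ] using h x
  obtain ⟨g, hg, -⟩ := exists_extension_norm_eq _ (φ.mkContinuous c hbound)
  refine ⟨(InnerProductSpace.toDual ℂ G).symm g, ext_inner_right ℂ fun x => ?_⟩
  rw [adjoint_inner_left, InnerProductSpace.toDual_symm_apply]
  exact (hg ⟨T x, LinearMap.mem_range_self _ x⟩).trans (hφ x)

lemma range_sqrt_adjoint_comp_self_subset (T : H →L[ℂ] G) :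
    Set.range ⇑(CFC.sqrt (adjoint T ∘L T : H →L[ℂ] H)) ⊆ Set.range (adjoint T) := by
  set Q := CFC.sqrt (adjoint T ∘L T)
  have hQ : IsSelfAdjoint Q := .of_nonneg (CFC.sqrt_nonneg _)
  have hQQ : Q ∘L Q = adjoint T ∘L T := CFC.sqrt_mul_sqrt_self _ (adjoint_comp_self_nonneg T)
  have hnorm : ∀ u, ‖Q u‖ = ‖T u‖ := fun u => by
    have : ⟪Q u, Q u⟫_ℂ = ⟪T u, T u⟫_ℂ := by
      rw [← adjoint_inner_left, hQ.adjoint_eq, ← comp_apply, hQQ, comp_apply, adjoint_inner_left]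
    rw [← sq_eq_sq₀ (norm_nonneg _) (norm_nonneg _), ← inner_self_eq_norm_sq (𝕜 := ℂ),
      ← inner_self_eq_norm_sq (𝕜 := ℂ), this]
  rintro _ ⟨z, rfl⟩
  refine mem_range_adjoint_of_norm_inner_le T (Q z) ‖z‖ fun u => ?_
  calc ‖⟪Q z, u⟫_ℂ‖ = ‖⟪z, Q u⟫_ℂ‖ := by rw [← adjoint_inner_right, hQ.adjoint_eq]
    _ ≤ ‖z‖ * ‖Q u‖ := norm_inner_le_norm _ _
    _ = ‖z‖ * ‖T u‖ := by rw [hnorm]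

lemma eq_zero_of_adjoint_smul_sqrt_apply_mem_range_adjoint {D S : H →L[ℂ] H} (hD : 0 ≤ D)
    (hker : LinearMap.ker (D : H →ₗ[ℂ] H) = ⊥) (hS : IsSelfAdjoint S)
    (hDS : Set.range ⇑(CFC.sqrt D) ∩ Set.range ⇑S = {0}) {c : ℝ} (hc : c ≠ 0) (x : H)
    (hx : adjoint (c • CFC.sqrt D) x ∈ Set.range (adjoint S)) : x = 0 := by
  rw [((IsSelfAdjoint.all c).smul (.of_nonneg (CFC.sqrt_nonneg D))).adjoint_eq,
    hS.adjoint_eq] at hx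
  have hsqrt : CFC.sqrt D (c • x) = 0 := hDS.subset ⟨⟨c • x, rfl⟩, by simpa using hx⟩
  have hDx : D (c • x) = 0 := by
    rw [← CFC.sqrt_mul_sqrt_self D hD, mul_def, comp_apply, hsqrt, map_zero]
  have : c • x = 0 := by simpa [hker] using LinearMap.mem_ker.2 hDx
  exact (smul_eq_zero.1 this).resolve_left hc

end Range

section BlockOperator

@[simp] lemma blk_apply_fst (A : E →L[ℂ] E) (B : F →L[ℂ] E) (C : E →L[ℂ] F) (D : F →L[ℂ] F)
    (x : WithLp 2 (E × F)) : (blk A B C D x).fst = A x.fst + B x.snd := rfl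

@[simp] lemma blk_apply_snd (A : E →L[ℂ] E) (B : F →L[ℂ] E) (C : E →L[ℂ] F) (D : F →L[ℂ] F)
    (x : WithLp 2 (E × F)) : (blk A B C D x).snd = C x.fst + D x.snd := rfl

@[simp] lemma inr2_apply_fst (f : F) : (inr2 (E := E) f).fst = 0 := rfl

@[simp] lemma inr2_apply_snd (f : F) : (inr2 (E := E) f).snd = f := rfl

omit [NormedAddCommGroup E] [InnerProductSpace ℂ E] [NormedAddCommGroup F]
  [InnerProductSpace ℂ F] in
lemma WithLp.prod_ext {x y : WithLp 2 (E × F)} (h₁ : x.fst = y.fst) (h₂ : x.snd = y.snd) :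
    x = y :=
  WithLp.ofLp_injective 2 (Prod.ext h₁ h₂)

lemma one_add_blk (A : E →L[ℂ] E) (B : F →L[ℂ] E) (C : E →L[ℂ] F) (D : F →L[ℂ] F) :
    1 + blk A B C D = blk (1 + A) B C (1 + D) := by
  ext x : 1
  refine WithLp.prod_ext ?_ ?_ <;>
    simp only [add_apply, one_apply_eq_self, WithLp.add_fst, WithLp.add_snd, blk_apply_fst,
      blk_apply_snd] <;> abel

lemma neg_blk (A : E →L[ℂ] E) (B : F →L[ℂ] E) (C : E →L[ℂ] F) (D : F →L[ℂ] F) :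
    -blk A B C D = blk (-A) (-B) (-C) (-D) := by
  ext x : 1
  refine WithLp.prod_ext ?_ ?_ <;>
    simp only [neg_apply, WithLp.neg_fst, WithLp.neg_snd, blk_apply_fst, blk_apply_snd, neg_add]

lemma range_blk_inter_range_inr2 (P : E →L[ℂ] E) (Q : F →L[ℂ] E)
    (h : ∀ f, Q f ∈ Set.range P → f = 0) :
    Set.range (blk P Q 0 1) ∩ Set.range (inr2 (E := E) (F := F)) = {0} := by
  refine Set.Subset.antisymm ?_ <|
    Set.singleton_subset_iff.2 ⟨⟨0, map_zero _⟩, 0, map_zero _⟩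
  rintro _ ⟨⟨v, rfl⟩, f, hf⟩
  have hfst : P v.fst + Q v.snd = 0 := by simpa using congrArg WithLp.fst hf.symm
  have hsnd : f = v.snd := by simpa using congrArg WithLp.snd hf
  have hv : v.snd = 0 := h _ ⟨-v.fst, by rw [map_neg, neg_eq_of_add_eq_zero_right hfst]⟩
  rw [Set.mem_singleton_iff, ← hf, hsnd, hv, map_zero]

variable [CompleteSpace E] [CompleteSpace F]

lemma adjoint_blk (A : E →L[ℂ] E) (B : F →L[ℂ] E) (C : E →L[ℂ] F) (D : F →L[ℂ] F) :
    adjoint (blk A B C D) = blk (adjoint A) (adjoint C) (adjoint B) (adjoint D) := by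
  refine ((eq_adjoint_iff _ _).2 fun x y => ?_).symm
  simp only [WithLp.prod_inner_apply, WithLp.ofLp_fst, WithLp.ofLp_snd, blk_apply_fst,
    blk_apply_snd, inner_add_left, inner_add_right, adjoint_inner_left]
  ring

lemma isSelfAdjoint_blk {A : E →L[ℂ] E} {D : F →L[ℂ] F} (hA : IsSelfAdjoint A)
    (B : F →L[ℂ] E) (hD : IsSelfAdjoint D) : IsSelfAdjoint (blk A B (adjoint B) D) := by
  rw [ContinuousLinearMap.isSelfAdjoint_iff', adjoint_blk, adjoint_adjoint, hA.adjoint_eq,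
    hD.adjoint_eq]

lemma adjoint_blk_comp_blk (S : E →L[ℂ] E) (B : E →L[ℂ] F) :
    adjoint (blk S 0 B 1) ∘L blk S 0 B 1 =
      blk (adjoint S ∘L S + adjoint B ∘L B) (adjoint B) B 1 := by
  ext x : 1
  refine WithLp.prod_ext ?_ ?_ <;> simp [adjoint_blk, adjoint_one, add_assoc]

lemma range_sqrt_adjoint_blk_comp_blk_inter_range_inr2
    (S : E →L[ℂ] E) (B : E →L[ℂ] F) (h : ∀ f, adjoint B f ∈ Set.range (adjoint S) → f = 0) :
    Set.range ⇑(CFC.sqrt (adjoint (blk S 0 B 1) ∘L blk S 0 B 1)) ∩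
      Set.range (inr2 (E := E) (F := F)) = {0} := by
  refine Set.Subset.antisymm ?_ <|
    Set.singleton_subset_iff.2 ⟨⟨0, map_zero _⟩, 0, map_zero _⟩
  refine (Set.inter_subset_inter_left _ (range_sqrt_adjoint_comp_self_subset _)).trans ?_
  rw [adjoint_blk, adjoint_one, map_zero]
  exact (range_blk_inter_range_inr2 _ _ h).subset

lemma one_add_blk_eq_adjoint_comp_self {A S B : E →L[ℂ] E} (hS : IsSelfAdjoint S)
    (hB : IsSelfAdjoint B) (h : S * S + B * B = 1 + A) :
    1 + blk A B B 0 = adjoint (blk S 0 B 1) ∘L blk S 0 B 1 := by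
  rw [adjoint_blk_comp_blk, one_add_blk, hS.adjoint_eq, hB.adjoint_eq, ← mul_def, ← mul_def, h,
    add_zero]

end BlockOperator

theorem stmt_11_general {K : Type*}
    [NormedAddCommGroup K] [InnerProductSpace ℂ K] [CompleteSpace K]
    (Z0 Z1 : K →L[ℂ] K) (hZ0sa : IsSelfAdjoint Z0) (hZ1sa : IsSelfAdjoint Z1)
    (hZ0c : ‖Z0‖ ≤ 1) (hZ1c : ‖Z1‖ ≤ 1) (hle : Z0 ≤ Z1)
    (h0 : Set.range ⇑(CFC.sqrt (Z1 - Z0)) ∩ Set.range ⇑(CFC.sqrt (1 + Z0)) = {0})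
    (h1 : Set.range ⇑(CFC.sqrt (Z1 - Z0)) ∩ Set.range ⇑(CFC.sqrt (1 - Z1)) = {0})
    (hker : LinearMap.ker ((Z1 - Z0 : K →L[ℂ] K) : K →ₗ[ℂ] K) = ⊥) :
    ∃ (X11 : K →L[ℂ] K) (X12 : K →L[ℂ] K) (X22 : K →L[ℂ] K),
      IsSelfAdjoint (blk X11 X12 (adjoint X12) X22) ∧
      ‖blk X11 X12 (adjoint X12) X22‖ ≤ 1 ∧
      Set.range ⇑(CFC.sqrt (1 + blk X11 X12 (adjoint X12) X22)) ∩
          Set.range ⇑(inr2 (E := K) (F := K)) = {0} ∧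
      Set.range ⇑(CFC.sqrt (1 - blk X11 X12 (adjoint X12) X22)) ∩
          Set.range ⇑(inr2 (E := K) (F := K)) = {0} ∧
      ‖X22‖ < 1 ∧
      Z0 = X11 - X12 ∘L Ring.inverse (1 + X22) ∘L adjoint X12 ∧
      Z1 = X11 + X12 ∘L Ring.inverse (1 - X22) ∘L adjoint X12 := by
  have hD : 0 ≤ Z1 - Z0 := sub_nonneg.2 hle
  obtain ⟨hZ0, -⟩ := hZ0sa.norm_le_one_iff.1 hZ0c
  obtain ⟨-, hZ1⟩ := hZ1sa.norm_le_one_iff.1 hZ1c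
  set R := CFC.sqrt (Z1 - Z0)
  have hR : IsSelfAdjoint R := .of_nonneg (CFC.sqrt_nonneg _)
  have hRR : R * R = Z1 - Z0 := CFC.sqrt_mul_sqrt_self _ hD
  set c : ℝ := (√2)⁻¹
  have hc : c ≠ 0 := by positivity
  have hBB : (c • R) * (c • R) = (2⁻¹ : ℝ) • (Z1 - Z0) := by
    rw [smul_mul_smul, hRR, ← mul_inv, Real.mul_self_sqrt zero_le_two]
  set X := blk ((2⁻¹ : ℝ) • (Z0 + Z1)) (c • R) (c • R) 0
  have hplus : 1 + X = adjoint (blk (CFC.sqrt (1 + Z0)) 0 (c • R) 1) ∘L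
      blk (CFC.sqrt (1 + Z0)) 0 (c • R) 1 := by
    refine one_add_blk_eq_adjoint_comp_self (.of_nonneg (CFC.sqrt_nonneg _))
      ((IsSelfAdjoint.all c).smul hR) ?_
    rw [CFC.sqrt_mul_sqrt_self _ hZ0, hBB]
    module
  have hminus : 1 - X = adjoint (blk (CFC.sqrt (1 - Z1)) 0 ((-c) • R) 1) ∘L
      blk (CFC.sqrt (1 - Z1)) 0 ((-c) • R) 1 := by
    rw [sub_eq_add_neg, neg_blk, neg_zero, ← neg_smul c R]
    refine one_add_blk_eq_adjoint_comp_self (.of_nonneg (CFC.sqrt_nonneg _))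
      ((IsSelfAdjoint.all _).smul hR) ?_
    rw [CFC.sqrt_mul_sqrt_self _ hZ1, neg_smul, neg_mul_neg, hBB]
    module
  have hX : IsSelfAdjoint X := by
    simpa only [((IsSelfAdjoint.all c).smul hR).adjoint_eq] using
      isSelfAdjoint_blk ((IsSelfAdjoint.all (2⁻¹ : ℝ)).smul (hZ0sa.add hZ1sa)) (c • R) (.zero _)
  refine ⟨(2⁻¹ : ℝ) • (Z0 + Z1), c • R, 0, ?_⟩
  rw [((IsSelfAdjoint.all c).smul hR).adjoint_eq]
  refine ⟨hX, hX.norm_le_one_iff.2 ⟨hplus ▸ adjoint_comp_self_nonneg _,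
    hminus ▸ adjoint_comp_self_nonneg _⟩, ?_, ?_, by simp, ?_, ?_⟩
  · rw [hplus]
    exact range_sqrt_adjoint_blk_comp_blk_inter_range_inr2 _ _ <|
      eq_zero_of_adjoint_smul_sqrt_apply_mem_range_adjoint hD hker
        (.of_nonneg (CFC.sqrt_nonneg _)) h0 hc
  · rw [hminus]
    exact range_sqrt_adjoint_blk_comp_blk_inter_range_inr2 _ _ <|
      eq_zero_of_adjoint_smul_sqrt_apply_mem_range_adjoint hD hker
        (.of_nonneg (CFC.sqrt_nonneg _)) h1 (neg_ne_zero.2 hc)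
  · rw [add_zero, Ring.inverse_one, one_def, id_comp, ← mul_def, hBB]
    module
  · rw [sub_zero, Ring.inverse_one, one_def, id_comp, ← mul_def, hBB]
    module

/-- Given selfadjoint contractions `Ẑ₀ ≤ Ẑ₁` on an infinite-dimensional separable Hilbert
space `K` with `ran (Ẑ₁ − Ẑ₀)^{1/2} ∩ ran (I + Ẑ₀)^{1/2} = {0}`,
`ran (Ẑ₁ − Ẑ₀)^{1/2} ∩ ran (I − Ẑ₁)^{1/2} = {0}` and `ker (Ẑ₁ − Ẑ₀) = {0}`, there is a
selfadjoint contraction `X = [[X₁₁, X₁₂], [X₁₂*, X₂₂]]` on `K ⊕ K` with `(I ± X)_K = 0`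
(on the second summand), `‖X₂₂‖ < 1`, `Ẑ₀ = X₁₁ − X₁₂ (I + X₂₂)⁻¹ X₁₂*` and
`Ẑ₁ = X₁₁ + X₁₂ (I − X₂₂)⁻¹ X₁₂*`. -/
theorem stmt_11 {K : Type*}
    [NormedAddCommGroup K] [InnerProductSpace ℂ K] [CompleteSpace K]
    [TopologicalSpace.SeparableSpace K] (hK : ¬FiniteDimensional ℂ K)
    (Z0 Z1 : K →L[ℂ] K) (hZ0sa : IsSelfAdjoint Z0) (hZ1sa : IsSelfAdjoint Z1)
    (hZ0c : ‖Z0‖ ≤ 1) (hZ1c : ‖Z1‖ ≤ 1) (hle : Z0 ≤ Z1)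
    (h0 : Set.range ⇑(CFC.sqrt (Z1 - Z0)) ∩ Set.range ⇑(CFC.sqrt (1 + Z0)) = {0})
    (h1 : Set.range ⇑(CFC.sqrt (Z1 - Z0)) ∩ Set.range ⇑(CFC.sqrt (1 - Z1)) = {0})
    (hker : LinearMap.ker ((Z1 - Z0 : K →L[ℂ] K) : K →ₗ[ℂ] K) = ⊥) :
    ∃ (X11 : K →L[ℂ] K) (X12 : K →L[ℂ] K) (X22 : K →L[ℂ] K),
      IsSelfAdjoint (blk X11 X12 (adjoint X12) X22) ∧
      ‖blk X11 X12 (adjoint X12) X22‖ ≤ 1 ∧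
      Set.range ⇑(CFC.sqrt (1 + blk X11 X12 (adjoint X12) X22)) ∩
          Set.range ⇑(inr2 (E := K) (F := K)) = {0} ∧
      Set.range ⇑(CFC.sqrt (1 - blk X11 X12 (adjoint X12) X22)) ∩
          Set.range ⇑(inr2 (E := K) (F := K)) = {0} ∧
      ‖X22‖ < 1 ∧
      Z0 = X11 - X12 ∘L Ring.inverse (1 + X22) ∘L adjoint X12 ∧
      Z1 = X11 + X12 ∘L Ring.inverse (1 - X22) ∘L adjoint X12 :=
  stmt_11_general Z0 Z1 hZ0sa hZ1sa hZ0c hZ1c hle h0 h1 hker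
end
end
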